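/- For every ε, δ ∈ (0,1), every positive integer m with m ≥ 2/(ε²δ), every positive integer n, and every unit vector x ∈ ℝⁿ (‖x‖₂ = 1), feature hashing satisfies Pr[ | ‖Ax‖₂² − 1 | ≥ ε ] ≤ δ. -/

import Mathlib

open scoped BigOperators Classical
noncomputable section

namespace FH

def hashSq (n m : ℕ) (h : Fin n → Fin m) (σ : Fin n → Bool) (x : Fin n → ℝ) : ℝ :=
  ∑ i : Fin m, (∑ j : Fin n, (if h j = i then (if σ j then (1:ℝ) else -1) * x j else 0)) ^ 2

def hashPr (n m : ℕ) (P : (Fin n → Fin m) → (Fin n → Bool) → Prop) : ℝ :=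
  ((Finset.univ.filter (fun p : (Fin n → Fin m) × (Fin n → Bool) => P p.1 p.2)).card : ℝ) /
    (Fintype.card ((Fin n → Fin m) × (Fin n → Bool)) : ℝ)

def l2 (n : ℕ) (x : Fin n → ℝ) : ℝ := Real.sqrt (∑ j, x j ^ 2)

def linf (n : ℕ) (x : Fin n → ℝ) : ℝ := ⨆ j, |x j|

def goodPr (n m : ℕ) (ε : ℝ) (x : Fin n → ℝ) : ℝ :=
  hashPr n m (fun h σ => |hashSq n m h σ x - l2 n x ^ 2| < ε * l2 n x ^ 2)

def nuSet (m : ℕ) (ε δ : ℝ) : Set ℝ :=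
  {ν | ν ∈ Set.Icc (0:ℝ) 1 ∧ ∀ n : ℕ, 0 < n → ∀ x : Fin n → ℝ, x ≠ 0 →
    linf n x ≤ ν * l2 n x → 1 - δ ≤ goodPr n m ε x}

def nu (m : ℕ) (ε δ : ℝ) : ℝ := sSup (nuSet m ε δ)

def lg (x : ℝ) : ℝ := Real.logb 2 x


/-! Expanding the square, `‖Ax‖² - ‖x‖² = ∑_{j ≠ k} [h j = h k] σ_j σ_k x_j x_k`. Averaged over
the signs, the products `σ_j σ_k` of distinct unordered pairs are orthogonal, so the second moment
of the error is `2 ∑_{j ≠ k} Pr[h j = h k] x_j² x_k² ≤ 2 ‖x‖⁴ / m`. Chebyshev's inequality then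
bounds `Pr[|‖Ax‖² - 1| ≥ ε]` by `2 / (ε² m) ≤ δ`. -/

open Finset

def boolSign (b : Bool) : ℝ := if b then 1 else -1

@[simp] lemma boolSign_not (b : Bool) : boolSign (!b) = -boolSign b := by
  cases b <;> simp [boolSign]

@[simp] lemma boolSign_mul_self (b : Bool) : boolSign b * boolSign b = 1 := by
  cases b <;> simp [boolSign]

section Signs

variable {ι : Type*} [Fintype ι] [DecidableEq ι]

def pairSign (σ : ι → Bool) (p : ι × ι) : ℝ := boolSign (σ p.1) * boolSign (σ p.2)

lemma sum_boolSign_mul_eq_zero (i : ι) (g : (ι → Bool) → ℝ)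
    (hg : ∀ σ, g (Function.update σ i (!σ i)) = g σ) :
    ∑ σ, boolSign (σ i) * g σ = 0 :=
  sum_involution (fun σ _ => Function.update σ i (!σ i)) (fun σ _ => by simp [hg])
    (fun σ _ _ hσ => by simpa using congrFun hσ i) (fun _ _ => mem_univ _)
    (fun σ _ => by simp)

/-- If `q` is not `p` up to order, some index occurs once in the product, and flipping its sign
negates the summand. -/
lemma sum_pairSign_mul_pairSign {p q : ι × ι} (hp : p.1 ≠ p.2) (hq : q.1 ≠ q.2) :
    ∑ σ : ι → Bool, pairSign σ p * pairSign σ q =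
      (if q = p then 2 ^ Fintype.card ι else 0) +
        (if q = p.swap then 2 ^ Fintype.card ι else 0) := by
  obtain ⟨j, k⟩ := p
  obtain ⟨a, b⟩ := q
  simp only [pairSign, Prod.swap_prod_mk, Prod.mk.injEq] at hp hq ⊢
  have card_eq : ∑ _σ : ι → Bool, (1 : ℝ) = 2 ^ Fintype.card ι := by simp
  have vanish : ∀ {i c d e : ι}, i ≠ c → i ≠ d → i ≠ e →
      ∑ σ : ι → Bool,
        boolSign (σ i) * (boolSign (σ c) * (boolSign (σ d) * boolSign (σ e))) = 0 :=
    fun hc hd he => sum_boolSign_mul_eq_zero _ _ fun σ => by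
      simp [Function.update_of_ne hc.symm, Function.update_of_ne hd.symm,
        Function.update_of_ne he.symm]
  have square_eq_one : ∀ σ : ι → Bool, ∀ c d : ι,
      boolSign (σ c) * boolSign (σ d) * (boolSign (σ c) * boolSign (σ d)) = 1 := by
    intro σ c d
    linear_combination (boolSign (σ d) * boolSign (σ d)) * boolSign_mul_self (σ c) +
      boolSign_mul_self (σ d)
  by_cases h₁ : a = j ∧ b = k
  · obtain ⟨rfl, rfl⟩ := h₁
    rw [if_pos ⟨rfl, rfl⟩, if_neg (by grind), add_zero, ← card_eq]
    exact sum_congr rfl fun σ _ => square_eq_one σ a b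
  by_cases h₂ : a = k ∧ b = j
  · obtain ⟨rfl, rfl⟩ := h₂
    rw [if_neg h₁, if_pos ⟨rfl, rfl⟩, zero_add, ← card_eq]
    exact sum_congr rfl fun σ _ => by rw [mul_comm (boolSign (σ a))]; exact square_eq_one σ b a
  rw [if_neg h₁, if_neg h₂, add_zero]
  by_cases hj : j ≠ a ∧ j ≠ b
  · rw [← vanish hp hj.1 hj.2]
    exact sum_congr rfl fun σ _ => by ring
  · have hk : k ≠ a ∧ k ≠ b := by grind
    rw [← vanish (Ne.symm hp) hk.1 hk.2]
    exact sum_congr rfl fun σ _ => by ring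

lemma sum_sq_sum_offDiag_pairSign (c : ι × ι → ℝ) (hc : ∀ p, c p.swap = c p) :
    ∑ σ : ι → Bool, (∑ p ∈ univ.offDiag, c p * pairSign σ p) ^ 2 =
      2 * 2 ^ Fintype.card ι * ∑ p ∈ univ.offDiag, c p ^ 2 := by
  set N : ℝ := 2 ^ Fintype.card ι
  have inner : ∀ p ∈ (univ : Finset ι).offDiag,
      ∑ q ∈ univ.offDiag, c p * c q * ∑ σ : ι → Bool, pairSign σ p * pairSign σ q =
        2 * N * c p ^ 2 := by
    intro p hp
    have hp' := (mem_offDiag.mp hp).2.2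
    have hswap : p.swap ∈ (univ : Finset ι).offDiag := by simpa using hp'.symm
    rw [sum_congr rfl fun q hq => by
      rw [sum_pairSign_mul_pairSign hp' (mem_offDiag.mp hq).2.2, mul_add, mul_ite, mul_ite,
        mul_zero]]
    rw [sum_add_distrib, sum_ite_eq' _ _, sum_ite_eq' _ _, if_pos hp, if_pos hswap, hc]
    ring
  calc ∑ σ : ι → Bool, (∑ p ∈ univ.offDiag, c p * pairSign σ p) ^ 2
      = ∑ p ∈ univ.offDiag, ∑ q ∈ univ.offDiag,
          c p * c q * ∑ σ : ι → Bool, pairSign σ p * pairSign σ q := by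
        simp_rw [sq, sum_mul_sum, mul_sum]
        rw [sum_comm]
        refine sum_congr rfl fun p _ => ?_
        rw [sum_comm]
        exact sum_congr rfl fun q _ => sum_congr rfl fun σ _ => by ring
    _ = 2 * N * ∑ p ∈ univ.offDiag, c p ^ 2 := by rw [sum_congr rfl inner, mul_sum]

end Signs

section Collisions

variable {ι κ : Type*}

def collisionEquiv [DecidableEq ι] {j k : ι} (hjk : j ≠ k) :
    {h : ι → κ // h j = h k} ≃ ({i // i ≠ j} → κ) where
  toFun h i := h.1 i
  invFun g :=
    ⟨fun i => if hi : i = j then g ⟨k, hjk.symm⟩ else g ⟨i, hi⟩, by simp [hjk.symm]⟩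
  left_inv h := by
    ext i
    by_cases hi : i = j
    · subst hi; simp [h.2]
    · simp [hi]
  right_inv g := by
    ext ⟨i, hi⟩
    simp [hi]

lemma card_filter_apply_eq_apply [Fintype ι] [DecidableEq ι] [Fintype κ] [DecidableEq κ]
    {j k : ι} (hjk : j ≠ k) :
    #{h : ι → κ | h j = h k} = Fintype.card κ ^ (Fintype.card ι - 1) := by
  rw [← Fintype.card_subtype, Fintype.card_congr (collisionEquiv hjk), Fintype.card_fun,
    Fintype.card_subtype_compl, Fintype.card_subtype_eq]

lemma sum_sq_sum_ite_eq [Fintype ι] [Fintype κ] [DecidableEq κ] (h : ι → κ) (y : ι → ℝ) :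
    ∑ i, (∑ j, if h j = i then y j else 0) ^ 2 =
      ∑ j, ∑ k, if h j = h k then y j * y k else 0 := by
  simp_rw [sq, sum_mul_sum, ite_mul, mul_ite, zero_mul, mul_zero]
  rw [sum_comm]
  refine sum_congr rfl fun j _ => ?_
  rw [sum_comm]
  refine sum_congr rfl fun k _ => ?_
  simp only [ite_self]
  rw [sum_ite_eq]
  simp [eq_comm]

lemma sum_sum_eq_sum_add_sum_offDiag [Fintype ι] [DecidableEq ι] {M : Type*} [AddCommMonoid M]
    (F : ι → ι → M) :
    ∑ j, ∑ k, F j k = ∑ j, F j j + ∑ p ∈ univ.offDiag, F p.1 p.2 := by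
  rw [← sum_product', ← diag_union_offDiag, sum_union (disjoint_diag_offDiag _), sum_diag]

lemma sum_offDiag_sq_mul_sq_le [Fintype ι] [DecidableEq ι] (x : ι → ℝ) :
    ∑ p ∈ univ.offDiag, x p.1 ^ 2 * x p.2 ^ 2 ≤ (∑ j, x j ^ 2) ^ 2 := by
  rw [sq, sum_mul_sum, sum_sum_eq_sum_add_sum_offDiag]
  exact le_add_of_nonneg_left (sum_nonneg fun _ _ => by positivity)

def collisionCoeff [DecidableEq κ] (h : ι → κ) (x : ι → ℝ) (p : ι × ι) : ℝ :=
  if h p.1 = h p.2 then x p.1 * x p.2 else 0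

lemma collisionCoeff_swap [DecidableEq κ] (h : ι → κ) (x : ι → ℝ) (p : ι × ι) :
    collisionCoeff h x p.swap = collisionCoeff h x p := by
  simp [collisionCoeff, eq_comm, mul_comm]

lemma sum_collisionCoeff_sq [Fintype ι] [DecidableEq ι] [Fintype κ] [DecidableEq κ]
    {p : ι × ι} (hp : p.1 ≠ p.2) (x : ι → ℝ) :
    ∑ h : ι → κ, collisionCoeff h x p ^ 2 =
      Fintype.card κ ^ (Fintype.card ι - 1) * (x p.1 ^ 2 * x p.2 ^ 2) := by
  simp_rw [collisionCoeff, ite_pow, zero_pow two_ne_zero]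
  rw [sum_ite, sum_const_zero, add_zero, sum_const, card_filter_apply_eq_apply hp, nsmul_eq_mul]
  push_cast
  ring

end Collisions

lemma hashSq_eq (n m : ℕ) (h : Fin n → Fin m) (σ : Fin n → Bool) (x : Fin n → ℝ) :
    hashSq n m h σ x =
      ∑ j, x j ^ 2 + ∑ p ∈ univ.offDiag, collisionCoeff h x p * pairSign σ p := by
  refine (sum_sq_sum_ite_eq h fun j => boolSign (σ j) * x j).trans ?_
  rw [sum_sum_eq_sum_add_sum_offDiag]
  congr 1
  · refine sum_congr rfl fun j _ => ?_
    rw [if_pos rfl]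
    linear_combination x j ^ 2 * boolSign_mul_self (σ j)
  · refine sum_congr rfl fun p _ => ?_
    unfold collisionCoeff pairSign
    split_ifs <;> ring

lemma sum_sum_sq_hashSq_sub (n m : ℕ) (x : Fin n → ℝ) :
    ∑ h : Fin n → Fin m, ∑ σ : Fin n → Bool, (hashSq n m h σ x - ∑ j, x j ^ 2) ^ 2 =
      2 * 2 ^ n * m ^ (n - 1) * ∑ p ∈ univ.offDiag, x p.1 ^ 2 * x p.2 ^ 2 := by
  calc ∑ h : Fin n → Fin m, ∑ σ : Fin n → Bool, (hashSq n m h σ x - ∑ j, x j ^ 2) ^ 2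
      = ∑ h : Fin n → Fin m, 2 * 2 ^ n * ∑ p ∈ univ.offDiag, collisionCoeff h x p ^ 2 := by
        refine sum_congr rfl fun h _ => ?_
        simp_rw [hashSq_eq, add_sub_cancel_left]
        rw [sum_sq_sum_offDiag_pairSign _ (collisionCoeff_swap h x), Fintype.card_fin]
    _ = 2 * 2 ^ n * ∑ p ∈ univ.offDiag, ∑ h : Fin n → Fin m, collisionCoeff h x p ^ 2 := by
        rw [← mul_sum, sum_comm]
    _ = 2 * 2 ^ n * m ^ (n - 1) * ∑ p ∈ univ.offDiag, x p.1 ^ 2 * x p.2 ^ 2 := by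
        rw [sum_congr rfl fun p hp => sum_collisionCoeff_sq (mem_offDiag.mp hp).2.2 x]
        simp [mul_sum, mul_assoc]

lemma sum_sq_hashSq_sub_one_le {n m : ℕ} {x : Fin n → ℝ} (hx : ∑ j, x j ^ 2 = 1) :
    ∑ p : (Fin n → Fin m) × (Fin n → Bool), (hashSq n m p.1 p.2 x - 1) ^ 2 ≤
      2 * 2 ^ n * (m : ℝ) ^ (n - 1) := by
  have cross := sum_offDiag_sq_mul_sq_le x
  rw [hx, one_pow] at cross
  rw [Fintype.sum_prod_type' fun h σ => (hashSq n m h σ x - 1) ^ 2, ← hx, sum_sum_sq_hashSq_sub]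
  exact mul_le_of_le_one_right (by positivity) cross

lemma sq_mul_card_filter_le_sum_sq {α : Type*} (s : Finset α) (f : α → ℝ) {ε : ℝ}
    (hε : 0 ≤ ε) :
    ε ^ 2 * #{a ∈ s | ε ≤ |f a|} ≤ ∑ a ∈ s, f a ^ 2 :=
  calc ε ^ 2 * #{a ∈ s | ε ≤ |f a|} = ∑ a ∈ s with ε ≤ |f a|, ε ^ 2 := by
        rw [sum_const, nsmul_eq_mul, mul_comm]
    _ ≤ ∑ a ∈ s with ε ≤ |f a|, f a ^ 2 := sum_le_sum fun a ha => by
        simpa using pow_le_pow_left₀ hε (mem_filter.mp ha).2 2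
    _ ≤ ∑ a ∈ s, f a ^ 2 :=
        sum_le_sum_of_subset_of_nonneg (filter_subset _ _) fun _ _ _ => sq_nonneg _

theorem prob_bound_of_large_m :
    ∀ ε δ : ℝ, ε ∈ Set.Ioo (0:ℝ) 1 → δ ∈ Set.Ioo (0:ℝ) 1 → ∀ m : ℕ, 0 < m →
      2 / (ε^2 * δ) ≤ (m:ℝ) →
      ∀ n : ℕ, 0 < n → ∀ x : Fin n → ℝ, l2 n x = 1 →
        hashPr n m (fun h σ => ε ≤ |hashSq n m h σ x - 1|) ≤ δ := by
  rintro ε δ ⟨hε, -⟩ ⟨hδ, -⟩ m hm hmδ n hn x hx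
  have hnorm : ∑ j, x j ^ 2 = 1 := by rwa [l2, Real.sqrt_eq_one] at hx
  have markov := sq_mul_card_filter_le_sum_sq univ
    (fun p : (Fin n → Fin m) × (Fin n → Bool) => hashSq n m p.1 p.2 x - 1) hε.le
  have hcard :
      (Fintype.card ((Fin n → Fin m) × (Fin n → Bool)) : ℝ) = m ^ (n - 1) * m * 2 ^ n := by
    simp [← pow_succ, Nat.sub_add_cancel hn]
  have hmδ' : 2 ≤ ε ^ 2 * δ * m := by
    rw [div_le_iff₀ (by positivity)] at hmδ
    linear_combination hmδ
  rw [hashPr, hcard, div_le_iff₀ (by positivity)]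
  refine le_of_mul_le_mul_left ?_ (by positivity : 0 < ε ^ 2)
  calc ε ^ 2 * _ ≤ 2 * 2 ^ n * m ^ (n - 1) := markov.trans (sum_sq_hashSq_sub_one_le hnorm)
    _ ≤ ε ^ 2 * δ * m * 2 ^ n * m ^ (n - 1) := by gcongr
    _ = ε ^ 2 * (δ * (m ^ (n - 1) * m * 2 ^ n)) := by ring

end FH
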